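/- Let ν be an infinite regular cardinal with ν^{<ν} = ν and let A ⊆ ν^ν. Player II has a winning strategy in the Banach–Mazur game G_ν(A) if and only if there is a dense continuous homomorphism f : ν^{<ν} → ν^{<ν} with ran(f*) ⊆ ν^ν ∖ A and f(∅) = ∅. -/

import Mathlib

universe u

noncomputable section

/-! ## Sequences of ordinals

`SeqLT o v` is the set `v^{<o}` of all sequences of ordinals `< v` of length `< o`
(for `o > 0`; values beyond the length are normalized to `0`).
`SeqFull o v` is the generalized Baire space `v^o` of all functions from ordinals `< o`
to ordinals `< v`. -/

/-- An element of `v^{<o}`: a sequence of ordinals `< v` of length `< o`. -/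
structure SeqLT (o v : Ordinal.{u}) : Type (u + 1) where
  len : Ordinal.{u}
  len_lt : len < o ⊔ 1
  val : Ordinal.{u} → Ordinal.{u}
  val_lt : ∀ β, β < len → val β < v
  val_zero : ∀ β, len ≤ β → val β = 0

namespace SeqLT

variable {o v : Ordinal.{u}}

/-- `s ⊆ t`, i.e. `t` end-extends `s`. -/
protected def le (s t : SeqLT o v) : Prop :=
  s.len ≤ t.len ∧ ∀ β, β < s.len → s.val β = t.val β

/-- `s ⊊ t`, i.e. `t` properly end-extends `s`. -/
protected def slt (s t : SeqLT o v) : Prop :=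
  s.le t ∧ s.len < t.len

/-- The empty sequence. -/
protected def empty (o v : Ordinal.{u}) : SeqLT o v where
  len := 0
  len_lt := lt_sup_iff.mpr (Or.inr zero_lt_one)
  val := fun _ => 0
  val_lt := fun β h => absurd h (not_lt.mpr (zero_le : (0 : Ordinal.{u}) ≤ β))
  val_zero := fun _ _ => rfl

/-- `s⌢⟨β⟩`: the sequence `s` extended by the single value `β`. -/
def snoc (s : SeqLT o v) (β : Ordinal.{u}) : SeqLT o v :=
  if h : s.len + 1 < o ⊔ 1 ∧ β < v then
    { len := s.len + 1
      len_lt := h.1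
      val := fun γ => if γ = s.len then β else s.val γ
      val_lt := fun γ hγ => by
        rcases eq_or_ne γ s.len with rfl | hne
        · simpa using h.2
        · simp only [if_neg hne]
          refine s.val_lt γ (lt_of_le_of_ne ?_ hne)
          rw [Ordinal.add_one_eq_succ] at hγ
          exact Order.lt_succ_iff.mp hγ
      val_zero := fun γ hγ => by
        have h1 : s.len < γ :=
          lt_of_lt_of_le (by rw [Ordinal.add_one_eq_succ]; exact Order.lt_succ s.len) hγ
        simp only [if_neg h1.ne']
        exact s.val_zero γ h1.le }
  else s

protected theorem le_refl (s : SeqLT o v) : s.le s :=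
  ⟨le_rfl, fun _ _ => rfl⟩

protected theorem le_trans {s t u : SeqLT o v} (h1 : s.le t) (h2 : t.le u) : s.le u :=
  ⟨h1.1.trans h2.1, fun β hβ => (h1.2 β hβ).trans (h2.2 β (lt_of_lt_of_le hβ h1.1))⟩

end SeqLT

/-- An element of the generalized Baire space `v^o`. -/
structure SeqFull (o v : Ordinal.{u}) : Type (u + 1) where
  val : Ordinal.{u} → Ordinal.{u}
  val_lt : ∀ β, β < o → val β < v
  val_zero : ∀ β, o ≤ β → val β = 0

/-- The restriction `x ↾ β` of `x : v^o` to an ordinal `β < o`. -/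
def SeqFull.res {o v : Ordinal.{u}} (x : SeqFull o v) (β : Ordinal.{u}) : SeqLT o v :=
  if h : β < o ⊔ 1 then
    { len := β
      len_lt := h
      val := fun γ => if γ < β then x.val γ else 0
      val_lt := fun γ hγ => by
        simp only [if_pos hγ]
        rcases lt_sup_iff.mp h with h' | h'
        · exact x.val_lt γ (hγ.trans h')
        · rw [Ordinal.lt_one_iff_zero] at h'
          exact absurd (h' ▸ hγ) (not_lt.mpr (zero_le : (0 : Ordinal.{u}) ≤ γ))
      val_zero := fun γ hγ => if_neg (not_lt.mpr hγ) }
  else SeqLT.empty o v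

/-- `s ⊆ x`: the sequence `s` is an initial segment of `x : v^o`. -/
def SeqLT.prefixOf {o v : Ordinal.{u}} (s : SeqLT o v) (x : SeqFull o v) : Prop :=
  ∀ β, β < s.len → s.val β = x.val β

/-! ## The bounded topology -/

/-- The basic open set `N_t`. -/
def basicOpen {o v : Ordinal.{u}} (t : SeqLT o v) : Set (SeqFull o v) :=
  {x | t.prefixOf x}

/-- The bounded (standard) topology on the generalized Baire space, generated by the
basic open sets `N_t`. -/
instance (o v : Ordinal.{u}) : TopologicalSpace (SeqFull o v) :=
  TopologicalSpace.generateFrom {U | ∃ t : SeqLT o v, U = basicOpen t}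

/-- `A` is a nowhere dense subset of `B` (in the subspace topology on `B`). -/
def NowhereDenseIn {o v : Ordinal.{u}} (A B : Set (SeqFull o v)) : Prop :=
  A ⊆ B ∧ interior (closure {x : ↥B | (x : SeqFull o v) ∈ A}) = ∅

/-- `A` is `o`-meager in `B`: `A ∩ B` is the union of (card of) `o` many nowhere dense
subsets of `B`. -/
def MeagerIn {o v : Ordinal.{u}} (A B : Set (SeqFull o v)) : Prop :=
  ∃ F : {β : Ordinal.{u} // β < o} → Set (SeqFull o v),
    (∀ i, NowhereDenseIn (F i) B) ∧ A ∩ B = ⋃ i, F i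

/-- `A` is comeager in `B`: `B \ A` is meager in `B`. -/
def ComeagerIn {o v : Ordinal.{u}} (A B : Set (SeqFull o v)) : Prop :=
  MeagerIn (B \ A) B

/-- `A` has the `o`-Baire property: for some open `U`, `A △ U` is meager. -/
def BaireSet {o v : Ordinal.{u}} (A : Set (SeqFull o v)) : Prop :=
  ∃ U : Set (SeqFull o v), IsOpen U ∧ MeagerIn (symmDiff A U) Set.univ

/-! ## Homomorphisms of `v^{<o}` -/

/-- A homomorphism: strictly extension-preserving map of `v^{<o}` to itself. -/
def IsHom {o v : Ordinal.{u}} (f : SeqLT o v → SeqLT o v) : Prop :=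
  ∀ s t : SeqLT o v, s.slt t → (f s).slt (f t)

/-- `f` is dense: for every `s` and every `t ⊇ f(s)` there is `β < v` with
`f(s⌢⟨β⟩) ⊇ t`. -/
def IsDenseMap {o v : Ordinal.{u}} (f : SeqLT o v → SeqLT o v) : Prop :=
  ∀ s t : SeqLT o v, (f s).le t → ∃ β, β < v ∧ t.le (f (s.snoc β))

/-- `u = ⋃_{α<γ} s α` for a chain `s`. -/
def IsUnionOfChain {o v : Ordinal.{u}} (u : SeqLT o v) (γ : Ordinal.{u})
    (s : Ordinal.{u} → SeqLT o v) : Prop :=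
  (∀ α, α < γ → (s α).le u) ∧ ∀ β, β < u.len → ∃ α, α < γ ∧ β < (s α).len

/-- `f` is continuous: for every limit `γ < o` and every strictly increasing sequence
`⟨s_α : α < γ⟩`, `f(⋃_{α<γ} s_α) = ⋃_{α<γ} f(s_α)`. -/
def IsContinuousMap {o v : Ordinal.{u}} (f : SeqLT o v → SeqLT o v) : Prop :=
  ∀ γ : Ordinal.{u}, Order.IsSuccLimit γ → γ < o →
    ∀ s : Ordinal.{u} → SeqLT o v, (∀ α β, α < β → β < γ → (s α).slt (s β)) →
      ∀ u : SeqLT o v, IsUnionOfChain u γ s → IsUnionOfChain (f u) γ fun α => f (s α)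

/-- `y = f*(x) = ⋃_{α<o} f(x↾α)` for a homomorphism `f`. -/
def FStarVal {o v : Ordinal.{u}} (f : SeqLT o v → SeqLT o v) (x y : SeqFull o v) : Prop :=
  (∀ α, α < o → (f (x.res α)).prefixOf y) ∧
    ∀ β, β < o → ∃ α, α < o ∧ β < (f (x.res α)).len

/-! ## Clubs and the almost Baire property -/

/-- `C` is a club (closed unbounded set) in the ordinal `o`. -/
def IsClubIn (C : Set Ordinal.{u}) (o : Ordinal.{u}) : Prop :=
  (∀ γ ∈ C, γ < o) ∧ (∀ β, β < o → ∃ γ ∈ C, β ≤ γ) ∧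
    ∀ β, β < o → 0 < β → (∀ γ, γ < β → ∃ ξ ∈ C, γ < ξ ∧ ξ < β) → β ∈ C

/-- The set of functions coding elements of the club filter as characteristic functions. -/
def ClSet (o v : Ordinal.{u}) : Set (SeqFull o v) :=
  {x | ∃ C : Set Ordinal.{u}, IsClubIn C o ∧ ∀ i ∈ C, x.val i ≠ 0}

/-- The set of functions coding elements of the nonstationary ideal. -/
def NsSet (o v : Ordinal.{u}) : Set (SeqFull o v) :=
  {x | ∃ C : Set Ordinal.{u}, IsClubIn C o ∧ ∀ i ∈ C, x.val i = 0}

/-- `A` is almost Baire: there is a dense homomorphism `f` with `ran f* ⊆ A`, or a dense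
continuous homomorphism `f` with `f ∅ = ∅` and `ran f* ⊆ Aᶜ`. -/
def AlmostBaire {o v : Ordinal.{u}} (A : Set (SeqFull o v)) : Prop :=
  ∃ f : SeqLT o v → SeqLT o v, IsHom f ∧ IsDenseMap f ∧
    ((∀ x y, FStarVal f x y → y ∈ A) ∨
      ((∀ x y, FStarVal f x y → y ∉ A) ∧ IsContinuousMap f ∧
        f (SeqLT.empty o v) = SeqLT.empty o v))

/-! ## Banach–Mazur games of length `o`

A run of the game is a strictly increasing sequence `⟨s_α : α < o⟩` in `v^{<o}`;
player I plays at even positions (`0` and limits count as even), player II at odd ones.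
In the game `G^t` the first move of player I must extend `t`; taking `t = ∅` gives the
plain Banach–Mazur game. -/

/-- `γ` is an even ordinal (`0` and limits are even). -/
def EvenOrd (γ : Ordinal.{u}) : Prop := ∃ δ : Ordinal.{u}, γ = 2 * δ

/-- `γ` is an odd ordinal. -/
def OddOrd (γ : Ordinal.{u}) : Prop := ∃ δ : Ordinal.{u}, γ = 2 * δ + 1

/-- The moves of a (partial) run, as a function on ordinals. -/
abbrev Play (o v : Ordinal.{u}) := Ordinal.{u} → SeqLT o v

/-- A strategy: given the length of the current position and the moves so far,
produce the next move. -/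
abbrev Strat (o v : Ordinal.{u}) := Ordinal.{u} → Play o v → SeqLT o v

/-- `p` is a legal partial run of length `γ` of the game `G^t`: strictly increasing moves,
the first move extends `t`, and the moves beyond `γ` are normalized to `∅`. -/
def IsPos {o v : Ordinal.{u}} (t : SeqLT o v) (p : Play o v) (γ : Ordinal.{u}) : Prop :=
  (∀ α β, α < β → β < γ → (p α).slt (p β)) ∧ (0 < γ → t.le (p 0)) ∧
    ∀ α, γ ≤ α → p α = SeqLT.empty o v

/-- The restriction of a run to its first `γ` moves. -/
def resPlay {o v : Ordinal.{u}} (p : Play o v) (γ : Ordinal.{u}) : Play o v :=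
  fun α => if α < γ then p α else SeqLT.empty o v

/-- `m` is a legal move at the position `p` of length `γ` in the game `G^t`. -/
def MoveOK {o v : Ordinal.{u}} (t : SeqLT o v) (p : Play o v) (γ : Ordinal.{u})
    (m : SeqLT o v) : Prop :=
  (∀ α, α < γ → (p α).slt m) ∧ (γ = 0 → t.le m)

/-- `σ` is a strategy for player I in `G^t`: it assigns a legal move to every legal
position of even length. -/
def LegalI {o v : Ordinal.{u}} (t : SeqLT o v) (σ : Strat o v) : Prop :=
  ∀ γ, γ < o → EvenOrd γ → ∀ p, IsPos t p γ → MoveOK t p γ (σ γ p)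

/-- `σ` is a strategy for player II in `G^t`: it assigns a legal move to every legal
position of odd length. -/
def LegalII {o v : Ordinal.{u}} (t : SeqLT o v) (σ : Strat o v) : Prop :=
  ∀ γ, γ < o → OddOrd γ → ∀ p, IsPos t p γ → MoveOK t p γ (σ γ p)

/-- The first `γ` moves of `p` follow the strategy `σ` of player I. -/
def FollowsI {o v : Ordinal.{u}} (σ : Strat o v) (p : Play o v) (γ : Ordinal.{u}) : Prop :=
  ∀ α, α < γ → EvenOrd α → p α = σ α (resPlay p α)

/-- The first `γ` moves of `p` follow the strategy `σ` of player II. -/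
def FollowsII {o v : Ordinal.{u}} (σ : Strat o v) (p : Play o v) (γ : Ordinal.{u}) : Prop :=
  ∀ α, α < γ → OddOrd α → p α = σ α (resPlay p α)

/-- `x = ⋃_{α<o} p α` is the outcome of the complete run `p`. -/
def IsOutcome {o v : Ordinal.{u}} (p : Play o v) (x : SeqFull o v) : Prop :=
  (∀ α, α < o → (p α).prefixOf x) ∧ ∀ β, β < o → ∃ α, α < o ∧ β < (p α).len

/-- Player I has a winning strategy in the Banach–Mazur game `G^t(A)` of length `o`. -/
def WinIStrat {o v : Ordinal.{u}} (t : SeqLT o v) (A : Set (SeqFull o v)) : Prop :=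
  ∃ σ : Strat o v, LegalI t σ ∧
    ∀ p : Play o v, IsPos t p o → FollowsI σ p o → ∃ x, IsOutcome p x ∧ x ∈ A

/-- Player II has a winning strategy in the Banach–Mazur game `G^t(A)` of length `o`. -/
def WinIIStrat {o v : Ordinal.{u}} (t : SeqLT o v) (A : Set (SeqFull o v)) : Prop :=
  ∃ σ : Strat o v, LegalII t σ ∧
    ∀ p : Play o v, IsPos t p o → FollowsII σ p o → ∃ x, IsOutcome p x ∧ x ∉ A

/-- `σ` is a tactic for player II: its moves depend only on the union of the previous moves. -/
def IsTacticII {o v : Ordinal.{u}} (t : SeqLT o v) (σ : Strat o v) : Prop :=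
  ∃ f : SeqLT o v → SeqLT o v, ∀ γ, γ < o → OddOrd γ → ∀ p, IsPos t p γ →
    ∀ u, IsUnionOfChain u γ p → σ γ p = f u

/-- Player II has a winning tactic in the Banach–Mazur game `G^t(A)` of length `o`. -/
def WinIITactic {o v : Ordinal.{u}} (t : SeqLT o v) (A : Set (SeqFull o v)) : Prop :=
  ∃ σ : Strat o v, LegalII t σ ∧ IsTacticII t σ ∧
    ∀ p : Play o v, IsPos t p o → FollowsII σ p o → ∃ x, IsOutcome p x ∧ x ∉ A

/-! ## Trees and perfect sets -/

/-- A subtree of `v^{<o}`: a downwards closed set of sequences. -/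
def IsSubtree {o v : Ordinal.{u}} (T : Set (SeqLT o v)) : Prop :=
  ∀ s ∈ T, ∀ r : SeqLT o v, r.le s → r ∈ T

/-- `T` is closed: every strictly increasing sequence in `T` of length `< o` has an
upper bound in `T`. -/
def TreeClosed {o v : Ordinal.{u}} (T : Set (SeqLT o v)) : Prop :=
  ∀ γ : Ordinal.{u}, γ < o → ∀ s : Ordinal.{u} → SeqLT o v,
    (∀ α β, α < β → β < γ → (s α).slt (s β)) → (∀ α, α < γ → s α ∈ T) →
      ∃ b ∈ T, ∀ α, α < γ → (s α).le b

/-- `t` is a direct successor of `s`. -/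
def IsDirectSucc {o v : Ordinal.{u}} (s t : SeqLT o v) : Prop :=
  s.slt t ∧ t.len = s.len + 1

/-- `T` is a perfect tree: a (nonempty) closed subtree whose splitting nodes are cofinal. -/
def IsPerfectTree {o v : Ordinal.{u}} (T : Set (SeqLT o v)) : Prop :=
  T.Nonempty ∧ IsSubtree T ∧ TreeClosed T ∧
    ∀ s ∈ T, ∃ t ∈ T, s.le t ∧
      ∃ t₁ ∈ T, ∃ t₂ ∈ T, IsDirectSucc t t₁ ∧ IsDirectSucc t t₂ ∧ t₁ ≠ t₂

/-- The body `[T]` of a tree `T`: the set of branches of length `o` through `T`. -/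
def treeBody {o v : Ordinal.{u}} (T : Set (SeqLT o v)) : Set (SeqFull o v) :=
  {x | ∀ α, α < o → x.res α ∈ T}


/-!
(⇐) Player II keeps a chain `shadow δ` in the domain of `f` and answers player I's move
`p (2 * δ)` by `f (shadow δ)`. Density lets `shadow δ` be chosen so that its image extends
`p (2 * δ)`; continuity and `f ∅ = ∅` keep `f` of the union of the earlier elements below
`p (2 * δ)` at limit stages. The outcome of the run is then `f*` of the union of the chain, so
it avoids `A`.

(⇒) Since `ν^{<ν} = ν`, the proper extensions of each node can be enumerated in order type
`ν`. A node `s` is read as instructions for player I: at stage `ζ` he plays the `s ζ`-th proper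
extension of the current position, and `f s` is `σ`'s answer to the last of these moves, unions
being taken at limit lengths. Legality of `σ` makes `f` a homomorphism, the enumeration makes it
dense, and each `f*(x)` is the outcome of a run following `σ`, hence not in `A`.
-/

open Ordinal Order Set

/-! ### Sequences and unions of chains -/

namespace SeqLT

variable {o v : Ordinal.{u}}

protected theorem ext {s t : SeqLT o v} (hlen : s.len = t.len)
    (hval : ∀ β < s.len, s.val β = t.val β) : s = t := by
  obtain ⟨l, hl, f, hf, hf0⟩ := s
  obtain ⟨l', hl', g, hg, hg0⟩ := t
  obtain rfl : l = l' := hlen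
  obtain rfl : f = g := funext fun β => by
    rcases lt_or_ge β l with h | h
    · exact hval β h
    · rw [hf0 β h, hg0 β h]
  rfl

instance : PartialOrder (SeqLT o v) where
  le := SeqLT.le
  lt := SeqLT.slt
  le_refl := SeqLT.le_refl
  le_trans _ _ _ := SeqLT.le_trans
  le_antisymm _ _ h h' := SeqLT.ext (le_antisymm h.1 h'.1) h.2
  lt_iff_le_not_ge s t := by
    refine ⟨fun h => ⟨h.1, fun h' => h.2.not_ge h'.1⟩, fun ⟨h, h'⟩ => ⟨h, ?_⟩⟩
    refine h.1.lt_of_ne fun hlen => h' ⟨hlen.ge, fun β hβ => ?_⟩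
    exact (h.2 β (hlen ▸ hβ)).symm

instance : Inhabited (SeqLT o v) := ⟨SeqLT.empty o v⟩

theorem len_le_len {s t : SeqLT o v} (h : s ≤ t) : s.len ≤ t.len := h.1

theorem len_lt_len {s t : SeqLT o v} (h : s < t) : s.len < t.len := h.2

theorem val_eq_of_le {s t : SeqLT o v} (h : s ≤ t) {β : Ordinal.{u}} (hβ : β < s.len) :
    s.val β = t.val β :=
  h.2 β hβ

theorem empty_le (s : SeqLT o v) : SeqLT.empty o v ≤ s :=
  ⟨zero_le, fun _ h => absurd h not_lt_zero⟩

/-- The initial segment `s ↾ β` of `s` (all of `s` when `s.len ≤ β`). -/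
def take (s : SeqLT o v) (β : Ordinal.{u}) : SeqLT o v where
  len := β ⊓ s.len
  len_lt := inf_le_right.trans_lt s.len_lt
  val γ := if γ < β then s.val γ else 0
  val_lt γ h := by
    rw [if_pos (h.trans_le inf_le_left)]
    exact s.val_lt γ (h.trans_le inf_le_right)
  val_zero γ h := by
    split_ifs with hγ
    · exact s.val_zero γ ((inf_le_iff.mp h).resolve_left hγ.not_ge)
    · rfl

theorem take_len {s : SeqLT o v} {β : Ordinal.{u}} (h : β ≤ s.len) : (s.take β).len = β :=
  inf_eq_left.mpr h

theorem take_val {s : SeqLT o v} {β γ : Ordinal.{u}} (h : γ < β) : (s.take β).val γ = s.val γ :=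
  if_pos h

theorem take_le (s : SeqLT o v) (β : Ordinal.{u}) : s.take β ≤ s :=
  ⟨inf_le_right, fun _ h => take_val (h.trans_le inf_le_left)⟩

theorem take_lt {s : SeqLT o v} {β : Ordinal.{u}} (h : β < s.len) : s.take β < s :=
  ⟨take_le s β, by rwa [take_len h.le]⟩

theorem take_eq_of_le {s t : SeqLT o v} (h : s ≤ t) : t.take s.len = s :=
  SeqLT.ext (take_len h.1) fun _ hβ => by
    rw [take_val (hβ.trans_eq (take_len h.1)), val_eq_of_le h (hβ.trans_eq (take_len h.1))]

theorem take_take (s : SeqLT o v) {β γ : Ordinal.{u}} (h : β ≤ γ) :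
    (s.take γ).take β = s.take β := by
  refine SeqLT.ext ?_ fun δ hδ => ?_
  · simp only [take, ← inf_assoc, inf_eq_left.mpr h]
  · have hδβ : δ < β := hδ.trans_le inf_le_left
    rw [take_val hδβ, take_val hδβ, take_val (hδβ.trans_le h)]

theorem take_strictMonoOn (s : SeqLT o v) : StrictMonoOn s.take (Iic s.len) :=
  fun β _ γ (hγ : γ ≤ s.len) h => by
    rw [← take_take s h.le]
    exact take_lt (by rwa [take_len hγ])

theorem take_congr {s t : SeqLT o v} (h : s ≤ t) {β : Ordinal.{u}} (hβ : β ≤ s.len) :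
    s.take β = t.take β := by
  refine SeqLT.ext (by rw [take_len hβ, take_len (hβ.trans h.1)]) fun γ hγ => ?_
  rw [take_len hβ] at hγ
  rw [take_val hγ, take_val hγ, val_eq_of_le h (hγ.trans_le hβ)]

theorem le_snoc (s : SeqLT o v) (β : Ordinal.{u}) : s ≤ s.snoc β := by
  unfold snoc
  split_ifs with h
  · refine ⟨(lt_add_one _).le, fun γ hγ => ?_⟩
    exact (if_neg hγ.ne).symm
  · exact le_rfl

section snoc

variable {s : SeqLT o v} {β : Ordinal.{u}} (hs : s.len + 1 < o ⊔ 1) (hβ : β < v)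

include hs hβ

theorem snoc_len : (s.snoc β).len = s.len + 1 := by
  rw [snoc, dif_pos ⟨hs, hβ⟩]

theorem snoc_val_len : (s.snoc β).val s.len = β := by
  rw [snoc, dif_pos ⟨hs, hβ⟩]
  exact if_pos rfl

theorem lt_snoc : s < s.snoc β :=
  ⟨le_snoc s β, by rw [snoc_len hs hβ]; exact lt_add_one _⟩

end snoc

theorem take_snoc (s : SeqLT o v) (β : Ordinal.{u}) : (s.snoc β).take s.len = s :=
  take_eq_of_le (le_snoc s β)

end SeqLT

namespace SeqFull

variable {o v : Ordinal.{u}}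

theorem ext {x y : SeqFull o v} (h : ∀ β < o, x.val β = y.val β) : x = y := by
  obtain ⟨f, hf, hf0⟩ := x
  obtain ⟨g, hg, hg0⟩ := y
  obtain rfl : f = g := funext fun β => by
    rcases lt_or_ge β o with hβ | hβ
    · exact h β hβ
    · rw [hf0 β hβ, hg0 β hβ]
  rfl

variable (x : SeqFull o v) {β γ : Ordinal.{u}}

theorem res_len (h : β < o) : (x.res β).len = β := by
  rw [res, dif_pos (lt_sup_of_lt_left h)]

theorem res_val (h : β < o) (hγ : γ < β) : (x.res β).val γ = x.val γ := by
  rw [res, dif_pos (lt_sup_of_lt_left h)]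
  exact if_pos hγ

theorem res_mono (h : β ≤ γ) (hγ : γ < o) : x.res β ≤ x.res γ := by
  have hβ := h.trans_lt hγ
  refine ⟨by rwa [res_len x hβ, res_len x hγ], fun δ hδ => ?_⟩
  rw [res_len x hβ] at hδ
  rw [res_val x hβ hδ, res_val x hγ (hδ.trans_le h)]

theorem take_res (h : β ≤ γ) (hγ : γ < o) : (x.res γ).take β = x.res β := by
  simpa only [res_len x (h.trans_lt hγ)] using SeqLT.take_eq_of_le (res_mono x h hγ)

end SeqFull

namespace SeqLT

variable {o v : Ordinal.{u}} {r s : SeqLT o v} {x : SeqFull o v}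

theorem prefixOf.of_le (hs : s.prefixOf x) (h : r ≤ s) : r.prefixOf x := fun β hβ =>
  (h.2 β hβ).trans (hs β (hβ.trans_le h.1))

theorem prefixOf.res_eq (hs : s.prefixOf x) (ho : s.len < o) : x.res s.len = s :=
  SeqLT.ext (x.res_len ho) fun β hβ => by
    rw [x.res_len ho] at hβ
    rw [x.res_val ho hβ, hs β hβ]

theorem prefixOf.res_eq_take (hs : s.prefixOf x) (ho : s.len < o) {β : Ordinal.{u}}
    (hβ : β ≤ s.len) : x.res β = s.take β := by
  rw [← (hs.of_le (take_le s β)).res_eq ((take_len hβ).trans_lt (hβ.trans_lt ho)), take_len hβ]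

end SeqLT

section Chains

variable {o v γ : Ordinal.{u}} {s s' : Ordinal.{u} → SeqLT o v} {u u' w : SeqLT o v}

theorem strictMonoOn_Iio_iff :
    StrictMonoOn s (Iio γ) ↔ ∀ α β, α < β → β < γ → (s α).slt (s β) :=
  ⟨fun h _ _ hαβ hβ => h (hαβ.trans hβ) hβ hαβ, fun h α _ β hβ hαβ => h α β hαβ hβ⟩

theorem MonotoneOn.val_eq {α α' β : Ordinal.{u}} (hs : MonotoneOn s (Iio γ)) (hα : α < γ)
    (hα' : α' < γ) (hβ : β < (s α).len) (hβ' : β < (s α').len) :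
    (s α).val β = (s α').val β := by
  rcases le_total α α' with h | h
  · exact (hs hα hα' h).2 β hβ
  · exact ((hs hα' hα h).2 β hβ').symm

open Classical in
def chainVal (γ : Ordinal.{u}) (s : Ordinal.{u} → SeqLT o v) (β : Ordinal.{u}) : Ordinal.{u} :=
  if h : ∃ α < γ, β < (s α).len then (s h.choose).val β else 0

theorem chainVal_eq {α β : Ordinal.{u}} (hs : MonotoneOn s (Iio γ)) (hα : α < γ)
    (hβ : β < (s α).len) : chainVal γ s β = (s α).val β := by
  have h : ∃ α < γ, β < (s α).len := ⟨α, hα, hβ⟩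
  rw [chainVal, dif_pos h]
  exact hs.val_eq h.choose_spec.1 hα h.choose_spec.2 hβ

namespace IsUnionOfChain

theorem le (hu : IsUnionOfChain u γ s) {α : Ordinal.{u}} (hα : α < γ) : s α ≤ u :=
  hu.1 α hα

theorem le_of_forall_le (hu : IsUnionOfChain u γ s) (hw : ∀ α < γ, s α ≤ w) : u ≤ w := by
  refine ⟨le_of_forall_lt fun β hβ => ?_, fun β hβ => ?_⟩
  · obtain ⟨α, hα, hβα⟩ := hu.2 β hβ
    exact hβα.trans_le (hw α hα).1
  · obtain ⟨α, hα, hβα⟩ := hu.2 β hβ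
    rw [← (hu.1 α hα).2 β hβα, (hw α hα).2 β hβα]

theorem unique (hu : IsUnionOfChain u γ s) (hu' : IsUnionOfChain u' γ s) : u = u' :=
  (hu.le_of_forall_le hu'.1).antisymm (hu'.le_of_forall_le hu.1)

theorem congr (h : ∀ α < γ, s α = s' α) (hu : IsUnionOfChain u γ s) :
    IsUnionOfChain u γ s' :=
  ⟨fun α hα => h α hα ▸ hu.1 α hα, fun β hβ => by
    obtain ⟨α, hα, hβα⟩ := hu.2 β hβ
    exact ⟨α, hα, h α hα ▸ hβα⟩⟩

theorem isSuccPrelimit_len (hu : IsUnionOfChain u γ s) (hγ : IsSuccPrelimit γ)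
    (hs : StrictMonoOn s (Iio γ)) : IsSuccPrelimit u.len := by
  refine isSuccPrelimit_iff_succ_ne.mpr fun ε hε => ?_
  rw [Order.succ_eq_add_one] at hε
  obtain ⟨α, hα, hεα⟩ := hu.2 ε (hε ▸ lt_add_one ε)
  have h := (SeqLT.len_lt_len (hs hα (hγ.add_one_lt hα) (lt_add_one α))).trans_le
    (SeqLT.len_le_len (hu.le (hγ.add_one_lt hα)))
  exact (Order.add_one_le_iff.mpr hεα).not_gt (hε ▸ h)

end IsUnionOfChain

theorem isUnionOfChain_zero : IsUnionOfChain (SeqLT.empty o v) 0 s :=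
  ⟨fun _ h => absurd h not_lt_zero, fun _ h => absurd h not_lt_zero⟩

theorem isUnionOfChain_add_one {ε : Ordinal.{u}} (hs : ∀ α ≤ ε, s α ≤ s ε) :
    IsUnionOfChain (s ε) (ε + 1) s :=
  ⟨fun α hα => hs α (Order.lt_add_one_iff.mp hα), fun _ hβ => ⟨ε, lt_add_one ε, hβ⟩⟩

theorem exists_isUnionOfChain (hs : MonotoneOn s (Iio γ))
    (hsup : ⨆ α : Iio γ, (s α).len < o ⊔ 1) : ∃ u, IsUnionOfChain u γ s := by
  have hle (α : Ordinal.{u}) (hα : α < γ) : (s α).len ≤ ⨆ α : Iio γ, (s α).len :=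
    Ordinal.le_iSup (fun α : Iio γ => (s α).len) ⟨α, hα⟩
  have hval_lt (β) (hβ : β < ⨆ α : Iio γ, (s α).len) : chainVal γ s β < v := by
    obtain ⟨⟨α, hα⟩, hβα⟩ := Ordinal.lt_iSup_iff.mp hβ
    rw [chainVal_eq hs hα hβα]
    exact (s α).val_lt β hβα
  have hval_zero (β) (hβ : ⨆ α : Iio γ, (s α).len ≤ β) : chainVal γ s β = 0 :=
    dif_neg fun ⟨α, hα, hβα⟩ => hβ.not_gt (hβα.trans_le (hle α hα))
  refine ⟨⟨_, hsup, chainVal γ s, hval_lt, hval_zero⟩, fun α hα => ?_, fun β hβ => ?_⟩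
  · exact ⟨hle α hα, fun β hβ => (chainVal_eq hs hα hβ).symm⟩
  · obtain ⟨⟨α, hα⟩, hβα⟩ := Ordinal.lt_iSup_iff.mp hβ
    exact ⟨α, hα, hβα⟩

/-- The union of the chain `⟨s α : α < γ⟩` (junk if there is none). -/
def chainSup (γ : Ordinal.{u}) (s : Ordinal.{u} → SeqLT o v) : SeqLT o v :=
  Classical.epsilon fun u => IsUnionOfChain u γ s

theorem isUnionOfChain_chainSup (h : IsUnionOfChain u γ s) :
    IsUnionOfChain (chainSup γ s) γ s :=
  Classical.epsilon_spec (p := fun u => IsUnionOfChain u γ s) ⟨u, h⟩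

theorem IsUnionOfChain.chainSup_eq (h : IsUnionOfChain u γ s) : chainSup γ s = u :=
  (isUnionOfChain_chainSup h).unique h

theorem chainSup_congr (h : ∀ α < γ, s α = s' α) : chainSup γ s = chainSup γ s' := by
  have : (fun u => IsUnionOfChain u γ s) = fun u => IsUnionOfChain u γ s' :=
    funext fun u => propext ⟨IsUnionOfChain.congr h, IsUnionOfChain.congr fun α hα => (h α hα).symm⟩
  rw [chainSup, chainSup, this]

theorem exists_isOutcome (hs : MonotoneOn s (Iio o))
    (hcof : ∀ β < o, ∃ α < o, β < (s α).len) : ∃ x, IsOutcome s x := by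
  have hval_lt (β) (hβ : β < o) : chainVal o s β < v := by
    obtain ⟨α, hα, hβα⟩ := hcof β hβ
    rw [chainVal_eq hs hα hβα]
    exact (s α).val_lt β hβα
  have hval_zero (β) (hβ : o ≤ β) : chainVal o s β = 0 := by
    refine dif_neg fun ⟨α, hα, hβα⟩ => hβ.not_gt (hβα.trans_le ?_)
    exact (s α).len_lt.le.trans (sup_le le_rfl (one_le_iff_pos.mpr (zero_le.trans_lt hα)))
  exact ⟨⟨chainVal o s, hval_lt, hval_zero⟩, fun α hα β hβ => (chainVal_eq hs hα hβ).symm, hcof⟩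

theorem IsOutcome.unique {p : Play o v} {x y : SeqFull o v} (hx : IsOutcome p x)
    (hy : IsOutcome p y) : x = y :=
  SeqFull.ext fun β hβ => by
    obtain ⟨α, hα, hβα⟩ := hx.2 β hβ
    rw [← hx.1 α hα β hβα, ← hy.1 α hα β hβα]

theorem StrictMonoOn.le_len (hs : StrictMonoOn s (Iio γ)) {α : Ordinal.{u}} (hα : α < γ) : α ≤ (s α).len := by
  induction α using WellFoundedLT.induction with
  | _ α ih =>
    exact le_of_forall_lt fun β hβ =>
      (ih β hβ (hβ.trans hα)).trans_lt (SeqLT.len_lt_len (hs (hβ.trans hα) hα hβ))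

theorem exists_isOutcome_of_strictMonoOn (ho : IsSuccPrelimit o) (hs : StrictMonoOn s (Iio o)) : ∃ x, IsOutcome s x :=
  exists_isOutcome hs.monotoneOn fun β hβ =>
    ⟨β + 1, ho.add_one_lt hβ, (lt_add_one β).trans_le (hs.le_len (ho.add_one_lt hβ))⟩

end Chains

namespace Cardinal.IsRegular

variable {ν : Cardinal.{u}} (hreg : ν.IsRegular) {δ γ : Ordinal.{u}}
include hreg

theorem ord_sup_one : ν.ord ⊔ 1 = ν.ord :=
  sup_eq_left.mpr (Order.one_le_iff_pos.mpr hreg.ord_pos)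

theorem isSuccLimit_ord : IsSuccLimit ν.ord :=
  Cardinal.isSuccLimit_ord hreg.aleph0_le

theorem add_one_lt_ord (h : δ < ν.ord) : δ + 1 < ν.ord :=
  hreg.isSuccLimit_ord.add_one_lt h

theorem two_mul_lt_ord (h : δ < ν.ord) : 2 * δ < ν.ord :=
  isPrincipal_mul_ord hreg.aleph0_le (lt_ord.mpr (by simpa using hreg.nat_lt 2)) h

theorem two_mul_ord : 2 * ν.ord = ν.ord :=
  ((mul_le_iff_of_isSuccLimit hreg.isSuccLimit_ord).mpr
    fun _ h => (hreg.two_mul_lt_ord h).le).antisymm (Ordinal.le_mul_right _ two_pos)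

theorem len_lt_ord (s : SeqLT ν.ord ν.ord) : s.len < ν.ord :=
  s.len_lt.trans_eq hreg.ord_sup_one

theorem len_add_one_lt (s : SeqLT ν.ord ν.ord) : s.len + 1 < ν.ord ⊔ 1 :=
  (hreg.add_one_lt_ord (hreg.len_lt_ord s)).trans_eq hreg.ord_sup_one.symm

theorem lt_snoc (s : SeqLT ν.ord ν.ord) {β : Ordinal.{u}} (hβ : β < ν.ord) : s < s.snoc β :=
  SeqLT.lt_snoc (hreg.len_add_one_lt s) hβ

theorem exists_isUnionOfChain {s : Ordinal.{u} → SeqLT ν.ord ν.ord} (hγ : γ < ν.ord)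
    (hs : MonotoneOn s (Iio γ)) : ∃ u, IsUnionOfChain u γ s := by
  refine _root_.exists_isUnionOfChain hs (lt_of_lt_of_eq ?_ hreg.ord_sup_one.symm)
  refine Ordinal.lift_iSup_lt_of_lt_cof ?_ fun α => hreg.len_lt_ord _
  rw [Cardinal.mk_Iio_ordinal, ← Ordinal.lift_cof, hreg.cof_ord]
  simpa [← Ordinal.lift_card] using lt_ord.mp hγ

end Cardinal.IsRegular

/-! ### Interleaved runs -/

namespace Ordinal

variable {a b : Ordinal.{u}}

theorem two_mul_div_two (a : Ordinal.{u}) : 2 * a / 2 = a :=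
  Ordinal.mul_div_cancel a two_ne_zero

theorem two_mul_add_one_div_two (a : Ordinal.{u}) : (2 * a + 1) / 2 = a := by
  rw [Ordinal.mul_add_div a two_ne_zero, Ordinal.div_eq_zero_of_lt one_lt_two, add_zero]

theorem two_mul_add_one_mod_two (a : Ordinal.{u}) : (2 * a + 1) % 2 = 1 := by
  rw [Ordinal.mul_add_mod_self, Ordinal.mod_eq_of_lt one_lt_two]

theorem exists_eq_two_mul_or_eq_two_mul_add_one (a : Ordinal.{u}) :
    ∃ b, a = 2 * b ∨ a = 2 * b + 1 := by
  refine ⟨a / 2, ?_⟩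
  rcases Order.le_one_iff.mp (Order.lt_two_iff.mp (Ordinal.mod_lt a two_ne_zero)) with h | h
  · left; simpa [h] using (Ordinal.div_add_mod a 2).symm
  · right; simpa [h] using (Ordinal.div_add_mod a 2).symm

theorem two_mul_lt_two_mul_iff : 2 * a < 2 * b ↔ a < b :=
  mul_lt_mul_iff_of_pos_left two_pos

theorem two_mul_le_two_mul_iff : 2 * a ≤ 2 * b ↔ a ≤ b :=
  mul_le_mul_iff_of_pos_left two_pos

theorem two_mul_add_one_add_one (a : Ordinal.{u}) : 2 * a + 1 + 1 = 2 * (a + 1) := by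
  rw [mul_add, mul_one, add_assoc, one_add_one_eq_two]

theorem two_mul_lt_two_mul_add_one_iff : 2 * a < 2 * b + 1 ↔ a ≤ b := by
  rw [Order.lt_add_one_iff, two_mul_le_two_mul_iff]

theorem two_mul_add_one_lt_two_mul_iff : 2 * a + 1 < 2 * b ↔ a < b := by
  rw [← Order.add_one_le_iff, two_mul_add_one_add_one, two_mul_le_two_mul_iff, Order.add_one_le_iff]

theorem two_mul_add_one_lt_two_mul_add_one_iff : 2 * a + 1 < 2 * b + 1 ↔ a < b := by
  rw [Order.lt_add_one_iff, Order.add_one_le_iff, two_mul_lt_two_mul_iff]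

end Ordinal

section Interleave

variable {o v : Ordinal.{u}} {a a' m m' : Ordinal.{u} → SeqLT o v} {L : Ordinal.{u}}

/-- The run in which player I plays `m ζ` at move `2 * ζ` and player II answers with
`a (ζ + 1)` at move `2 * ζ + 1`, for `ζ < L`; the last answer `a L` is left out. -/
def interleave (a m : Ordinal.{u} → SeqLT o v) (L : Ordinal.{u}) : Play o v := fun α =>
  if α + 1 < 2 * L then (if α % 2 = 0 then m (α / 2) else a (α / 2 + 1))
  else SeqLT.empty o v

theorem interleave_two_mul {ζ : Ordinal.{u}} (hζ : ζ < L) : interleave a m L (2 * ζ) = m ζ := by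
  rw [interleave, if_pos (two_mul_add_one_lt_two_mul_iff.mpr hζ), if_pos (Ordinal.mul_mod 2 ζ),
    two_mul_div_two]

theorem interleave_two_mul_add_one {ζ : Ordinal.{u}} (hζ : ζ + 1 < L) :
    interleave a m L (2 * ζ + 1) = a (ζ + 1) := by
  rw [interleave, if_pos (by rwa [two_mul_add_one_add_one, two_mul_lt_two_mul_iff]),
    if_neg (by rw [two_mul_add_one_mod_two]; exact one_ne_zero), two_mul_add_one_div_two]

theorem interleave_of_le {α : Ordinal.{u}} (h : 2 * L ≤ α + 1) :
    interleave a m L α = SeqLT.empty o v :=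
  if_neg h.not_gt

theorem interleave_congr (ha : ∀ ζ < L, a ζ = a' ζ) (hm : ∀ ζ < L, m ζ = m' ζ) :
    interleave a m L = interleave a' m' L := by
  funext α
  obtain ⟨ζ, rfl | rfl⟩ := exists_eq_two_mul_or_eq_two_mul_add_one α
  · rcases lt_or_ge ζ L with h | h
    · rw [interleave_two_mul h, interleave_two_mul h, hm ζ h]
    · have h' : 2 * L ≤ 2 * ζ + 1 := not_lt.mp (two_mul_add_one_lt_two_mul_iff.not.mpr h.not_gt)
      rw [interleave_of_le h', interleave_of_le h']
  · rcases lt_or_ge (ζ + 1) L with h | h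
    · rw [interleave_two_mul_add_one h, interleave_two_mul_add_one h, ha _ h]
    · have h' : 2 * L ≤ 2 * ζ + 1 + 1 := by
        rw [two_mul_add_one_add_one]
        exact two_mul_le_two_mul_iff.mpr h
      rw [interleave_of_le h', interleave_of_le h']

theorem interleave_strictMonoOn (ha : MonotoneOn a (Iio L)) (hlo : ∀ ζ < L, a ζ < m ζ)
    (hhi : ∀ ζ, ζ + 1 < L → m ζ < a (ζ + 1)) :
    StrictMonoOn (interleave a m L) {α | α + 1 < 2 * L} := by
  have hodd {j : Ordinal.{u}} (h : 2 * j + 1 + 1 < 2 * L) : j + 1 < L := by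
    rwa [two_mul_add_one_add_one, two_mul_lt_two_mul_iff] at h
  have heven {j : Ordinal.{u}} (h : 2 * j + 1 < 2 * L) : j < L :=
    two_mul_add_one_lt_two_mul_iff.mp h
  have hmono {i j : Ordinal.{u}} (h : i ≤ j) (hj : j < L) : a i ≤ a j :=
    ha (h.trans_lt hj) hj h
  intro α _ β (hβ : β + 1 < 2 * L) hαβ
  obtain ⟨i, rfl | rfl⟩ := exists_eq_two_mul_or_eq_two_mul_add_one α <;>
  obtain ⟨j, rfl | rfl⟩ := exists_eq_two_mul_or_eq_two_mul_add_one β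
  · have hij := two_mul_lt_two_mul_iff.mp hαβ
    have hj := heven hβ
    rw [interleave_two_mul (hij.trans hj), interleave_two_mul hj]
    exact (hhi i ((Order.add_one_le_iff.mpr hij).trans_lt hj)).trans_le
      (hmono (Order.add_one_le_iff.mpr hij) hj) |>.trans (hlo j hj)
  · have hij := two_mul_lt_two_mul_add_one_iff.mp hαβ
    have hj := hodd hβ
    rw [interleave_two_mul (hij.trans_lt ((lt_add_one j).trans hj)), interleave_two_mul_add_one hj]
    exact (hhi i ((add_le_add_left hij 1).trans_lt hj)).trans_le (hmono (add_le_add_left hij 1) hj)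
  · have hij := two_mul_add_one_lt_two_mul_iff.mp hαβ
    have hj := heven hβ
    rw [interleave_two_mul_add_one ((Order.add_one_le_iff.mpr hij).trans_lt hj),
      interleave_two_mul hj]
    exact (hmono (Order.add_one_le_iff.mpr hij) hj).trans_lt (hlo j hj)
  · have hij := two_mul_add_one_lt_two_mul_add_one_iff.mp hαβ
    have hj := hodd hβ
    rw [interleave_two_mul_add_one
        ((Order.add_one_le_iff.mpr hij).trans_lt ((lt_add_one j).trans hj)),
      interleave_two_mul_add_one hj]
    exact (hmono (Order.add_one_le_iff.mpr hij) ((lt_add_one j).trans hj)).trans_lt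
      ((hlo j ((lt_add_one j).trans hj)).trans (hhi j hj))

theorem resPlay_interleave {δ : Ordinal.{u}} (hδ : δ + 1 ≤ L) :
    resPlay (interleave a m L) (2 * δ + 1) = interleave a m (δ + 1) := by
  funext α
  rw [resPlay]
  split_ifs with h
  · have h' : α + 1 < 2 * (δ + 1) := by
      rw [← two_mul_add_one_add_one]
      exact (Order.add_one_le_iff.mpr h).trans_lt (lt_add_one _)
    simp only [interleave, if_pos h', if_pos (h'.trans_le (two_mul_le_two_mul_iff.mpr hδ))]
  · refine (interleave_of_le ?_).symm
    rw [← two_mul_add_one_add_one]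
    exact add_le_add_left (not_lt.mp h) 1

end Interleave

/-! ### From a homomorphism to a strategy of player II -/

theorem IsHom.lt {o v : Ordinal.{u}} {f : SeqLT o v → SeqLT o v} (hf : IsHom f)
    {s t : SeqLT o v} (h : s < t) : f s < f t :=
  hf s t h

theorem IsHom.monotone {o v : Ordinal.{u}} {f : SeqLT o v → SeqLT o v} (hf : IsHom f) :
    Monotone f := fun s t h => by
  rcases h.eq_or_lt with rfl | h
  · exact le_rfl
  · exact (hf.lt h).le

theorem IsContinuousMap.map_chainSup_le {ν : Cardinal.{u}}
    {f : SeqLT ν.ord ν.ord → SeqLT ν.ord ν.ord}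
    (hreg : ν.IsRegular) (hc : IsContinuousMap f)
    (hf0 : f (SeqLT.empty ν.ord ν.ord) = SeqLT.empty ν.ord ν.ord) {δ : Ordinal.{u}}
    (hδ : δ < ν.ord) {S : Ordinal.{u} → SeqLT ν.ord ν.ord} (hS : StrictMonoOn S (Iio δ))
    {t : SeqLT ν.ord ν.ord} (ht : ∀ ε < δ, f (S ε) ≤ t) : f (chainSup δ S) ≤ t := by
  rcases zero_or_succ_or_isSuccLimit δ with rfl | ⟨ε, rfl⟩ | hlim
  · rw [isUnionOfChain_zero.chainSup_eq, hf0]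
    exact SeqLT.empty_le t
  · rw [Order.succ_eq_add_one] at ht ⊢
    rw [(isUnionOfChain_add_one fun α hα => hS.monotoneOn ?_ ?_ hα).chainSup_eq]
    · exact ht ε (lt_add_one ε)
    · exact Order.lt_add_one_iff.mpr hα
    · exact lt_add_one ε
  · obtain ⟨u, hu⟩ := hreg.exists_isUnionOfChain hδ hS.monotoneOn
    rw [hu.chainSup_eq]
    exact (hc δ hlim hδ S (strictMonoOn_Iio_iff.mp hS) u hu).le_of_forall_le ht

namespace BanachMazur

variable {ν : Cardinal.{u}} (f : SeqLT ν.ord ν.ord → SeqLT ν.ord ν.ord)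

/-- `r ⌢ ⟨β, 0⟩` for a `β` such that `f (r ⌢ ⟨β⟩)` extends `t`, if there is one; the final `0`
makes `f` of it a proper extension of `t`. -/
def extendPast (r t : SeqLT ν.ord ν.ord) : SeqLT ν.ord ν.ord :=
  (r.snoc (Classical.epsilon fun β => β < ν.ord ∧ t ≤ f (r.snoc β))).snoc 0

theorem lt_extendPast (hreg : ν.IsRegular) (r t : SeqLT ν.ord ν.ord) : r < extendPast f r t :=
  (SeqLT.le_snoc r _).trans_lt (hreg.lt_snoc _ hreg.ord_pos)

theorem lt_map_extendPast (hreg : ν.IsRegular) (hf : IsHom f) (hd : IsDenseMap f)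
    {r t : SeqLT ν.ord ν.ord} (h : f r ≤ t) : t < f (extendPast f r t) :=
  lt_of_le_of_lt (Classical.epsilon_spec (hd r t h)).2 (hf.lt (hreg.lt_snoc _ hreg.ord_pos))

def shadow (p : Play ν.ord ν.ord) (δ : Ordinal.{u}) : SeqLT ν.ord ν.ord :=
  extendPast f (chainSup δ fun ε => if ε < δ then shadow p ε else SeqLT.empty _ _) (p (2 * δ))
termination_by δ

theorem shadow_eq (p : Play ν.ord ν.ord) (δ : Ordinal.{u}) :
    shadow f p δ = extendPast f (chainSup δ (shadow f p)) (p (2 * δ)) := by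
  rw [shadow, chainSup_congr fun ε hε => if_pos hε]

theorem shadow_strictMonoOn (hreg : ν.IsRegular) (p : Play ν.ord ν.ord) :
    StrictMonoOn (shadow f p) (Iio ν.ord) := by
  suffices h : ∀ δ < ν.ord, ∀ ε < δ, shadow f p ε < shadow f p δ from
    fun ε _ δ hδ hεδ => h δ hδ ε hεδ
  intro δ
  induction δ using WellFoundedLT.induction with
  | _ δ ih =>
    intro hδ ε hεδ
    have hS : StrictMonoOn (shadow f p) (Iio δ) := fun α _ β hβ hαβ => ih β hβ (hβ.trans hδ) α hαβ
    obtain ⟨u, hu⟩ := hreg.exists_isUnionOfChain hδ hS.monotoneOn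
    rw [shadow_eq f p δ, hu.chainSup_eq]
    exact (hu.le hεδ).trans_lt (lt_extendPast f hreg u _)

theorem shadow_congr {p q : Play ν.ord ν.ord} {δ : Ordinal.{u}}
    (h : ∀ ε ≤ δ, p (2 * ε) = q (2 * ε)) : shadow f p δ = shadow f q δ := by
  induction δ using WellFoundedLT.induction with
  | _ δ ih =>
    rw [shadow_eq, shadow_eq, h δ le_rfl,
      chainSup_congr fun ε hε => ih ε hε fun ε' hε' => h ε' (hε'.trans hε.le)]

open Classical in
/-- At a position of length `γ = 2 * δ + 1` we have `γ / 2 = δ`; the second branch only keeps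
the strategy legal. -/
def homStrategy : Strat ν.ord ν.ord := fun γ p =>
  if ∀ α < γ, p α < f (shadow f p (γ / 2)) then f (shadow f p (γ / 2))
  else (chainSup γ p).snoc 0

theorem homStrategy_legal (hreg : ν.IsRegular) :
    LegalII (SeqLT.empty ν.ord ν.ord) (homStrategy f) := by
  rintro γ hγ ⟨δ, rfl⟩ p hpos
  refine ⟨fun α hα => ?_, fun h => absurd h (zero_le.trans_lt (lt_add_one _)).ne'⟩
  unfold homStrategy
  split_ifs with h
  · exact h α hα
  · obtain ⟨u, hu⟩ := hreg.exists_isUnionOfChain hγ (strictMonoOn_Iio_iff.mpr hpos.1).monotoneOn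
    rw [hu.chainSup_eq]
    exact (hu.le hα).trans_lt (hreg.lt_snoc u hreg.ord_pos)

theorem homStrategy_run (hreg : ν.IsRegular) (hf : IsHom f) (hd : IsDenseMap f)
    (hc : IsContinuousMap f) (hf0 : f (SeqLT.empty ν.ord ν.ord) = SeqLT.empty ν.ord ν.ord)
    {p : Play ν.ord ν.ord} (hpos : IsPos (SeqLT.empty ν.ord ν.ord) p ν.ord)
    (hfol : FollowsII (homStrategy f) p ν.ord) {δ : Ordinal.{u}} (hδ : δ < ν.ord) :
    p (2 * δ + 1) = f (shadow f p δ) := by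
  have hp : StrictMonoOn p (Iio ν.ord) := strictMonoOn_Iio_iff.mpr hpos.1
  have h2δ : 2 * δ < ν.ord := hreg.two_mul_lt_ord hδ
  induction δ using WellFoundedLT.induction with
  | _ δ ih =>
    have hS : StrictMonoOn (shadow f p) (Iio δ) :=
      (shadow_strictMonoOn f hreg p).mono fun _ hε => lt_trans hε hδ
    have hlt : p (2 * δ) < f (shadow f p δ) := by
      rw [shadow_eq f p δ]
      refine lt_map_extendPast f hreg hf hd ?_
      refine hc.map_chainSup_le hreg hf0 hδ hS fun ε hε => ?_
      rw [← ih ε hε (hε.trans hδ) (hreg.two_mul_lt_ord (hε.trans hδ))]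
      exact (hp.monotoneOn (hreg.add_one_lt_ord (hreg.two_mul_lt_ord (hε.trans hδ))) h2δ
        (two_mul_add_one_lt_two_mul_iff.mpr hε).le)
    have hbelow : ∀ α < 2 * δ + 1, resPlay p (2 * δ + 1) α < f (shadow f p δ) := fun α hα => by
      rw [resPlay, if_pos hα]
      exact (hp.monotoneOn ((Order.lt_add_one_iff.mp hα).trans_lt h2δ) h2δ
        (Order.lt_add_one_iff.mp hα)).trans_lt hlt
    have hres : shadow f (resPlay p (2 * δ + 1)) δ = shadow f p δ :=
      shadow_congr f fun ε hε => if_pos (two_mul_lt_two_mul_add_one_iff.mpr hε)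
    rw [hfol _ (hreg.add_one_lt_ord h2δ) ⟨δ, rfl⟩, homStrategy, two_mul_add_one_div_two, hres,
      if_pos (hres ▸ hbelow)]

variable {f}

theorem fStarVal_of_run (hreg : ν.IsRegular) (hf : IsHom f) {p S : Play ν.ord ν.ord}
    (hrun : ∀ δ < ν.ord, p (2 * δ + 1) = f (S δ)) (hp : StrictMonoOn p (Iio ν.ord))
    (hS : StrictMonoOn S (Iio ν.ord)) {x χ : SeqFull ν.ord ν.ord} (hx : IsOutcome p x)
    (hχ : IsOutcome S χ) : FStarVal f χ x := by
  have hodd {δ : Ordinal.{u}} (hδ : δ < ν.ord) : 2 * δ + 1 < ν.ord :=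
    hreg.add_one_lt_ord (hreg.two_mul_lt_ord hδ)
  refine ⟨fun α hα => ?_, fun β hβ => ?_⟩
  · rw [(hχ.1 α hα).res_eq_take (hreg.len_lt_ord _) (hS.le_len hα)]
    refine (hx.1 _ (hodd hα)).of_le ?_
    exact hrun α hα ▸ hf.monotone (SeqLT.take_le _ _)
  · refine ⟨(S β).len, hreg.len_lt_ord _, ?_⟩
    rw [(hχ.1 β hβ).res_eq (hreg.len_lt_ord _), ← hrun β hβ]
    exact ((Ordinal.le_mul_right β two_pos).trans_lt (lt_add_one _)).trans_le (hp.le_len (hodd hβ))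

theorem winIIStrat_of_isHom (hreg : ν.IsRegular) (hf : IsHom f) (hd : IsDenseMap f)
    (hc : IsContinuousMap f) (hf0 : f (SeqLT.empty ν.ord ν.ord) = SeqLT.empty ν.ord ν.ord)
    {A : Set (SeqFull ν.ord ν.ord)} (hA : ∀ x y, FStarVal f x y → y ∉ A) :
    WinIIStrat (SeqLT.empty ν.ord ν.ord) A := by
  refine ⟨homStrategy f, homStrategy_legal f hreg, fun p hpos hfol => ?_⟩
  have hlim := hreg.isSuccLimit_ord.isSuccPrelimit
  have hp : StrictMonoOn p (Iio ν.ord) := strictMonoOn_Iio_iff.mpr hpos.1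
  have hS := shadow_strictMonoOn f hreg p
  obtain ⟨x, hx⟩ := exists_isOutcome_of_strictMonoOn hlim hp
  obtain ⟨χ, hχ⟩ := exists_isOutcome_of_strictMonoOn hlim hS
  refine ⟨x, hx, hA χ x (fStarVal_of_run hreg hf (fun δ hδ => ?_) hp hS hx hχ)⟩
  exact homStrategy_run f hreg hf hd hc hf0 hpos hfol hδ

/-! ### From a strategy of player II to a homomorphism -/

open scoped Cardinal in
theorem mk_seqLT_le (hreg : ν.IsRegular) (hpow : Cardinal.powerlt ν ν = ν) :
    #(SeqLT ν.ord ν.ord) ≤ #(Iio ν.ord) := by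
  let g : (Σ α : Iio ν.ord, Iio α.1 → Iio ν.ord) → SeqLT ν.ord ν.ord := fun z =>
    { len := z.1
      len_lt := z.1.2.trans_le le_sup_left
      val := fun β => if h : β < z.1 then z.2 ⟨β, h⟩ else 0
      val_lt := fun β h => by rw [dif_pos h]; exact (z.2 ⟨β, h⟩).2
      val_zero := fun β h => dif_neg h.not_gt }
  have hg : Function.Surjective g := fun s =>
    ⟨⟨⟨s.len, hreg.len_lt_ord s⟩, fun β => ⟨s.val β, s.val_lt β β.2⟩⟩,
      SeqLT.ext rfl fun β hβ => dif_pos hβ⟩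
  have hle (α : Iio ν.ord) : #(Iio α.1 → Iio ν.ord) ≤ Cardinal.lift.{u + 1} ν := by
    rw [Cardinal.mk_arrow, Cardinal.mk_Iio_ordinal, Cardinal.mk_Iio_ordinal, Cardinal.lift_id,
      Cardinal.lift_id, ← Cardinal.lift_power, Cardinal.lift_le, Cardinal.card_ord]
    exact (Cardinal.le_powerlt ν (Cardinal.lt_ord.mp α.2)).trans_eq hpow
  calc #(SeqLT ν.ord ν.ord) ≤ #(Σ α : Iio ν.ord, Iio α.1 → Iio ν.ord) :=
        Cardinal.mk_le_of_surjective hg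
    _ ≤ Cardinal.sum fun _ : Iio ν.ord => Cardinal.lift.{u + 1} ν :=
        Cardinal.mk_sigma _ ▸ Cardinal.sum_le_sum _ _ hle
    _ = #(Iio ν.ord) := by
        rw [Cardinal.sum_const', Cardinal.mk_Iio_ordinal, Cardinal.card_ord,
          Cardinal.mul_eq_self (Cardinal.aleph0_le_lift.mpr hreg.aleph0_le)]

theorem exists_surjOn_Iio (hreg : ν.IsRegular) (hpow : Cardinal.powerlt ν ν = ν) :
    ∃ e : Ordinal.{u} → SeqLT ν.ord ν.ord, SurjOn e (Iio ν.ord) univ := by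
  obtain ⟨ι⟩ := (Cardinal.le_def _ _).mp (mk_seqLT_le hreg hpow)
  have hι : Function.Injective fun t => (ι t : Ordinal.{u}) :=
    fun _ _ h => ι.injective (Subtype.ext h)
  exact ⟨Function.invFun fun t => (ι t : Ordinal.{u}), fun t _ =>
    ⟨ι t, (ι t).2, Function.leftInverse_invFun hι t⟩⟩

variable (e : Ordinal.{u} → SeqLT ν.ord ν.ord)

open Classical in
def extEnum (r : SeqLT ν.ord ν.ord) (β : Ordinal.{u}) : SeqLT ν.ord ν.ord :=
  if r < e β then e β else r.snoc 0

theorem lt_extEnum (hreg : ν.IsRegular) (r : SeqLT ν.ord ν.ord) (β : Ordinal.{u}) :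
    r < extEnum e r β := by
  unfold extEnum
  split_ifs with h
  · exact h
  · exact hreg.lt_snoc r hreg.ord_pos

theorem exists_extEnum_eq (he : SurjOn e (Iio ν.ord) univ) {r t : SeqLT ν.ord ν.ord}
    (h : r < t) : ∃ β < ν.ord, extEnum e r β = t := by
  obtain ⟨β, hβ, rfl⟩ := he (mem_univ t)
  exact ⟨β, hβ, if_pos h⟩

/-- Player I's move at stage `ζ` of the run along `s`. -/
def menuMove (g : SeqLT ν.ord ν.ord → SeqLT ν.ord ν.ord) (s : SeqLT ν.ord ν.ord)
    (ζ : Ordinal.{u}) : SeqLT ν.ord ν.ord :=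
  extEnum e (g (s.take ζ)) (s.val ζ)

theorem menuMove_take (g : SeqLT ν.ord ν.ord → SeqLT ν.ord ν.ord) (s : SeqLT ν.ord ν.ord)
    {ζ η : Ordinal.{u}} (h : ζ < η) : menuMove e g (s.take η) ζ = menuMove e g s ζ := by
  rw [menuMove, menuMove, SeqLT.take_take s h.le, SeqLT.take_val h]

/-- A position of length `2 * ε + 1` when `s.len = ε + 1`. -/
def runAlong (g : SeqLT ν.ord ν.ord → SeqLT ν.ord ν.ord) (s : SeqLT ν.ord ν.ord) :
    Play ν.ord ν.ord :=
  interleave (fun ζ => g (s.take ζ)) (menuMove e g s) s.len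

theorem runAlong_congr {g g' : SeqLT ν.ord ν.ord → SeqLT ν.ord ν.ord} {s : SeqLT ν.ord ν.ord}
    (h : ∀ ζ < s.len, g (s.take ζ) = g' (s.take ζ)) : runAlong e g s = runAlong e g' s :=
  interleave_congr h fun ζ hζ => by rw [menuMove, menuMove, h ζ hζ]

variable (σ : Strat ν.ord ν.ord)

/-- `Ordinal.pred s.len < s.len` says that `s.len` is a successor. -/
def homOfStrategy (s : SeqLT ν.ord ν.ord) : SeqLT ν.ord ν.ord :=
  if Ordinal.pred s.len < s.len then
    σ (2 * Ordinal.pred s.len + 1)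
      (runAlong e (fun r => if r.len < s.len then homOfStrategy r else SeqLT.empty _ _) s)
  else chainSup s.len fun ε => if ε < s.len then homOfStrategy (s.take ε) else SeqLT.empty _ _
termination_by s.len
decreasing_by
  · assumption
  · exact inf_le_left.trans_lt ‹_›

theorem homOfStrategy_of_len_eq_add_one {s : SeqLT ν.ord ν.ord} {ε : Ordinal.{u}}
    (hs : s.len = ε + 1) :
    homOfStrategy e σ s = σ (2 * ε + 1) (runAlong e (homOfStrategy e σ) s) := by
  rw [homOfStrategy, hs, Ordinal.pred_add_one, if_pos (lt_add_one ε), ← hs]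
  congr 1
  refine runAlong_congr e fun ζ hζ => if_pos ?_
  exact inf_le_left.trans_lt hζ

theorem homOfStrategy_of_isSuccPrelimit {s : SeqLT ν.ord ν.ord} (hs : IsSuccPrelimit s.len) :
    homOfStrategy e σ s = chainSup s.len fun ε => homOfStrategy e σ (s.take ε) := by
  rw [homOfStrategy, if_neg (Ordinal.pred_lt_iff_not_isSuccPrelimit.not_left.mpr hs)]
  exact chainSup_congr fun ε hε => if_pos hε

theorem strictMonoOn_homOfStrategy_take (hreg : ν.IsRegular) {s : SeqLT ν.ord ν.ord}
    {η : Ordinal.{u}} (hη : η ≤ s.len)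
    (hkey : ∀ ζ < η, menuMove e (homOfStrategy e σ) s ζ < homOfStrategy e σ (s.take (ζ + 1))) :
    StrictMonoOn (fun ζ => homOfStrategy e σ (s.take ζ)) (Iic η) := by
  suffices h : ∀ η' ≤ η, ∀ ζ < η', homOfStrategy e σ (s.take ζ) < homOfStrategy e σ (s.take η') from
    fun ζ _ η' hη' hζ => h η' hη' ζ hζ
  intro η'
  induction η' using WellFoundedLT.induction with
  | _ η' ih =>
    intro hη' ζ hζ
    rcases zero_or_succ_or_isSuccLimit η' with rfl | ⟨ε, rfl⟩ | hlim
    · exact absurd hζ not_lt_zero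
    · rw [Order.succ_eq_add_one] at ih hη' hζ ⊢
      have hε : ε < η := (lt_add_one ε).trans_le hη'
      have hstep := (lt_extEnum e hreg _ (s.val ε)).trans (hkey ε hε)
      rcases (Order.lt_add_one_iff.mp hζ).eq_or_lt with rfl | hζε
      · exact hstep
      · exact (ih ε (lt_add_one ε) hε.le ζ hζε).trans hstep
    · have hS : StrictMonoOn (fun ζ => homOfStrategy e σ (s.take ζ)) (Iio η') :=
        fun α _ β hβ hαβ => ih β hβ (hβ.le.trans hη') α hαβ
      have hlen : (s.take η').len = η' := SeqLT.take_len (hη'.trans hη)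
      obtain ⟨u, hu⟩ := hreg.exists_isUnionOfChain (hlen ▸ hreg.len_lt_ord _) hS.monotoneOn
      rw [homOfStrategy_of_isSuccPrelimit e σ (s := s.take η') (hlen.symm ▸ hlim.isSuccPrelimit),
        hlen, chainSup_congr fun ε hε => by rw [SeqLT.take_take s hε.le], hu.chainSup_eq]
      exact (hS hζ (hlim.add_one_lt hζ) (lt_add_one ζ)).trans_le (hu.le (hlim.add_one_lt hζ))

theorem isPos_runAlong (hreg : ν.IsRegular) {s : SeqLT ν.ord ν.ord} {ε : Ordinal.{u}}
    (hs : s.len = ε + 1)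
    (hkey : ∀ ζ < ε, menuMove e (homOfStrategy e σ) s ζ < homOfStrategy e σ (s.take (ζ + 1))) :
    IsPos (SeqLT.empty ν.ord ν.ord) (runAlong e (homOfStrategy e σ) s) (2 * ε + 1) := by
  have hmono : MonotoneOn (fun ζ => homOfStrategy e σ (s.take ζ)) (Iio s.len) :=
    (strictMonoOn_homOfStrategy_take e σ hreg (hs ▸ (lt_add_one ε).le) hkey).monotoneOn.mono
      fun ζ (hζ : ζ < s.len) => Order.lt_add_one_iff.mp (hs ▸ hζ)
  have hrun := interleave_strictMonoOn hmono (fun ζ _ => lt_extEnum e hreg _ _)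
    fun ζ hζ => hkey ζ (Order.add_one_le_iff.mp (Order.lt_add_one_iff.mp (hs ▸ hζ)))
  have h2s : 2 * s.len = 2 * ε + 1 + 1 := by rw [hs, ← two_mul_add_one_add_one]
  refine ⟨strictMonoOn_Iio_iff.mp (hrun.mono fun α (hα : α < 2 * ε + 1) => ?_),
    fun _ => SeqLT.empty_le _, fun α hα => interleave_of_le ?_⟩
  · show α + 1 < 2 * s.len
    exact h2s ▸ (Order.add_one_le_iff.mpr hα).trans_lt (lt_add_one _)
  · exact h2s ▸ add_le_add_left hα 1

variable {σ}

theorem menuMove_lt_homOfStrategy (hreg : ν.IsRegular)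
    (hleg : LegalII (SeqLT.empty ν.ord ν.ord) σ) {ε : Ordinal.{u}} {s : SeqLT ν.ord ν.ord}
    (hs : s.len = ε + 1) : menuMove e (homOfStrategy e σ) s ε < homOfStrategy e σ s := by
  induction ε using WellFoundedLT.induction generalizing s with
  | _ ε ih =>
    have hkey (ζ) (hζ : ζ < ε) :
        menuMove e (homOfStrategy e σ) s ζ < homOfStrategy e σ (s.take (ζ + 1)) := by
      have hlen : (s.take (ζ + 1)).len = ζ + 1 :=
        SeqLT.take_len (hs ▸ (Order.add_one_le_iff.mpr hζ).trans (lt_add_one ε).le)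
      simpa only [menuMove_take e _ s (lt_add_one ζ)] using ih ζ hζ hlen
    have hε : 2 * ε + 1 < ν.ord :=
      hreg.add_one_lt_ord (hreg.two_mul_lt_ord ((lt_add_one ε).trans (hs ▸ hreg.len_lt_ord s)))
    calc menuMove e (homOfStrategy e σ) s ε
        = runAlong e (homOfStrategy e σ) s (2 * ε) := (interleave_two_mul (hs ▸ lt_add_one ε)).symm
      _ < σ (2 * ε + 1) (runAlong e (homOfStrategy e σ) s) :=
        (hleg _ hε ⟨ε, rfl⟩ _ (isPos_runAlong e σ hreg hs hkey)).1 (2 * ε) (lt_add_one _)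
      _ = homOfStrategy e σ s := (homOfStrategy_of_len_eq_add_one e σ hs).symm

theorem menuMove_lt_homOfStrategy_take (hreg : ν.IsRegular)
    (hleg : LegalII (SeqLT.empty ν.ord ν.ord) σ)
    {s : SeqLT ν.ord ν.ord} {ζ : Ordinal.{u}} (hζ : ζ < s.len) :
    menuMove e (homOfStrategy e σ) s ζ < homOfStrategy e σ (s.take (ζ + 1)) := by
  simpa only [menuMove_take e _ s (lt_add_one ζ)] using
    menuMove_lt_homOfStrategy e hreg hleg (SeqLT.take_len (Order.add_one_le_iff.mpr hζ))

theorem isHom_homOfStrategy (hreg : ν.IsRegular) (hleg : LegalII (SeqLT.empty ν.ord ν.ord) σ) :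
    IsHom (homOfStrategy e σ) := by
  intro s t (hst : s < t)
  have h := strictMonoOn_homOfStrategy_take e σ hreg le_rfl
    (fun ζ hζ => menuMove_lt_homOfStrategy_take e hreg hleg hζ)
    (mem_Iic.mpr (SeqLT.len_le_len hst.le)) self_mem_Iic (SeqLT.len_lt_len hst)
  dsimp only at h
  rwa [SeqLT.take_eq_of_le hst.le, SeqLT.take_eq_of_le le_rfl] at h

theorem homOfStrategy_empty :
    homOfStrategy e σ (SeqLT.empty ν.ord ν.ord) = SeqLT.empty ν.ord ν.ord := by
  rw [homOfStrategy_of_isSuccPrelimit e σ isSuccPrelimit_zero]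
  exact isUnionOfChain_zero.chainSup_eq

theorem isDenseMap_homOfStrategy (hreg : ν.IsRegular)
    (hleg : LegalII (SeqLT.empty ν.ord ν.ord) σ) (he : SurjOn e (Iio ν.ord) univ) :
    IsDenseMap (homOfStrategy e σ) := by
  intro s t (hst : homOfStrategy e σ s ≤ t)
  rcases hst.eq_or_lt with rfl | hlt
  · exact ⟨0, hreg.ord_pos, ((isHom_homOfStrategy e hreg hleg).lt (hreg.lt_snoc s hreg.ord_pos)).le⟩
  · obtain ⟨β, hβ, hβt⟩ := exists_extEnum_eq e he hlt
    refine ⟨β, hβ, (?_ : t < _).le⟩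
    have h := menuMove_lt_homOfStrategy e hreg hleg (SeqLT.snoc_len (hreg.len_add_one_lt s) hβ)
    rwa [menuMove, SeqLT.take_snoc, SeqLT.snoc_val_len (hreg.len_add_one_lt s) hβ, hβt] at h

theorem isContinuousMap_homOfStrategy (hreg : ν.IsRegular)
    (hleg : LegalII (SeqLT.empty ν.ord ν.ord) σ) : IsContinuousMap (homOfStrategy e σ) := by
  intro γ hγ _ s hs u hu
  have hF := isHom_homOfStrategy e hreg hleg
  have hs' : StrictMonoOn s (Iio γ) := strictMonoOn_Iio_iff.mpr hs
  refine ⟨fun α hα => hF.monotone (hu.le hα), fun β hβ => ?_⟩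
  have hchain : StrictMonoOn (fun ε => homOfStrategy e σ (u.take ε)) (Iio u.len) :=
    fun _ hε _ hε' h =>
      hF.lt (u.take_strictMonoOn (Iio_subset_Iic_self hε) (Iio_subset_Iic_self hε') h)
  obtain ⟨w, hw⟩ := hreg.exists_isUnionOfChain (hreg.len_lt_ord u) hchain.monotoneOn
  rw [homOfStrategy_of_isSuccPrelimit e σ (hu.isSuccPrelimit_len hγ.isSuccPrelimit hs'),
    hw.chainSup_eq] at hβ
  obtain ⟨ε, hε, hβε⟩ := hw.2 β hβ
  obtain ⟨α, hα, hεα⟩ := hu.2 ε hε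
  refine ⟨α, hα, hβε.trans (SeqLT.len_lt_len ?_)⟩
  show homOfStrategy e σ (u.take ε) < homOfStrategy e σ (s α)
  rw [← SeqLT.take_congr (hu.le hα) hεα.le]
  exact hF.lt (SeqLT.take_lt hεα)

def fullRun (g : SeqLT ν.ord ν.ord → SeqLT ν.ord ν.ord) (x : SeqFull ν.ord ν.ord) :
    Play ν.ord ν.ord :=
  interleave (fun ζ => g (x.res ζ)) (fun ζ => extEnum e (g (x.res ζ)) (x.val ζ)) ν.ord

theorem resPlay_fullRun (g : SeqLT ν.ord ν.ord → SeqLT ν.ord ν.ord) (x : SeqFull ν.ord ν.ord)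
    {δ : Ordinal.{u}} (hδ : δ + 1 < ν.ord) :
    resPlay (fullRun e g x) (2 * δ + 1) = runAlong e g (x.res (δ + 1)) := by
  rw [fullRun, resPlay_interleave hδ.le, runAlong, x.res_len hδ]
  refine interleave_congr (fun ζ hζ => ?_) fun ζ hζ => ?_
  · rw [x.take_res hζ.le hδ]
  · rw [menuMove, x.take_res hζ.le hδ, x.res_val hδ hζ]

theorem isPos_fullRun (hreg : ν.IsRegular) (hleg : LegalII (SeqLT.empty ν.ord ν.ord) σ)
    (x : SeqFull ν.ord ν.ord) :
    IsPos (SeqLT.empty ν.ord ν.ord) (fullRun e (homOfStrategy e σ) x) ν.ord := by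
  have hF := isHom_homOfStrategy e hreg hleg
  have hhi (ζ) (hζ : ζ + 1 < ν.ord) : extEnum e (homOfStrategy e σ (x.res ζ)) (x.val ζ) <
      homOfStrategy e σ (x.res (ζ + 1)) := by
    simpa only [menuMove, x.take_res (lt_add_one ζ).le hζ, x.res_val hζ (lt_add_one ζ)] using
      menuMove_lt_homOfStrategy e hreg hleg (x.res_len hζ)
  have hrun := interleave_strictMonoOn (fun _ _ _ hb h => hF.monotone (x.res_mono h hb))
    (fun ζ _ => lt_extEnum e hreg _ _) hhi
  rw [hreg.two_mul_ord] at hrun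
  refine ⟨strictMonoOn_Iio_iff.mp (hrun.mono fun α hα => hreg.add_one_lt_ord hα),
    fun _ => SeqLT.empty_le _, fun α hα => interleave_of_le ?_⟩
  rw [hreg.two_mul_ord]
  exact hα.trans (lt_add_one α).le

theorem followsII_fullRun (hreg : ν.IsRegular) (x : SeqFull ν.ord ν.ord) :
    FollowsII σ (fullRun e (homOfStrategy e σ) x) ν.ord := by
  rintro _ hα ⟨δ, rfl⟩
  have hδ : δ + 1 < ν.ord := hreg.add_one_lt_ord
    (((Ordinal.le_mul_right δ two_pos).trans (lt_add_one _).le).trans_lt hα)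
  rw [resPlay_fullRun e _ x hδ, fullRun, interleave_two_mul_add_one hδ,
    homOfStrategy_of_len_eq_add_one e σ (x.res_len hδ)]

theorem isOutcome_fullRun (hreg : ν.IsRegular) (hleg : LegalII (SeqLT.empty ν.ord ν.ord) σ)
    {x y : SeqFull ν.ord ν.ord} (hxy : FStarVal (homOfStrategy e σ) x y) :
    IsOutcome (fullRun e (homOfStrategy e σ) x) y := by
  have hodd {α : Ordinal.{u}} (hα : α < ν.ord) : 2 * α + 1 < ν.ord :=
    hreg.add_one_lt_ord (hreg.two_mul_lt_ord hα)
  have hII {α : Ordinal.{u}} (hα : α < ν.ord) : fullRun e (homOfStrategy e σ) x (2 * α + 1) =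
      homOfStrategy e σ (x.res (α + 1)) :=
    interleave_two_mul_add_one (hreg.add_one_lt_ord hα)
  have hp := strictMonoOn_Iio_iff.mpr (isPos_fullRun e hreg hleg x).1
  refine ⟨fun α hα => (hxy.1 _ (hreg.add_one_lt_ord hα)).of_le ?_, fun β hβ => ?_⟩
  · refine (hp.monotoneOn hα (hodd hα) ?_).trans_eq (hII hα)
    exact (Ordinal.le_mul_right α two_pos).trans (lt_add_one _).le
  · obtain ⟨α, hα, hβα⟩ := hxy.2 β hβ
    refine ⟨2 * α + 1, hodd hα, hβα.trans_le ?_⟩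
    rw [hII hα]
    exact SeqLT.len_le_len ((isHom_homOfStrategy e hreg hleg).monotone
      (x.res_mono (lt_add_one α).le (hreg.add_one_lt_ord hα)))

end BanachMazur

open BanachMazur

/-- For an infinite regular cardinal `ν` with `ν^{<ν} = ν` and `A ⊆ ν^ν`: player II has a
winning strategy in the Banach–Mazur game `G_ν(A)` iff there is a dense continuous
homomorphism `f : ν^{<ν} → ν^{<ν}` with `ran f* ⊆ ν^ν ∖ A` and `f ∅ = ∅`. -/
theorem statement8 (ν : Cardinal.{u}) (hreg : ν.IsRegular)
    (hpow : Cardinal.powerlt ν ν = ν) (A : Set (SeqFull ν.ord ν.ord)) :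
    WinIIStrat (SeqLT.empty ν.ord ν.ord) A ↔
      ∃ f : SeqLT ν.ord ν.ord → SeqLT ν.ord ν.ord,
        IsHom f ∧ IsDenseMap f ∧ IsContinuousMap f ∧
          (∀ x y, FStarVal f x y → y ∉ A) ∧
          f (SeqLT.empty ν.ord ν.ord) = SeqLT.empty ν.ord ν.ord := by
  constructor
  · rintro ⟨σ, hleg, hwin⟩
    obtain ⟨e, he⟩ := exists_surjOn_Iio hreg hpow
    refine ⟨homOfStrategy e σ, isHom_homOfStrategy e hreg hleg,
      isDenseMap_homOfStrategy e hreg hleg he, isContinuousMap_homOfStrategy e hreg hleg,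
      fun x y hxy hy => ?_, homOfStrategy_empty e⟩
    obtain ⟨z, hz, hzA⟩ := hwin _ (isPos_fullRun e hreg hleg x) (followsII_fullRun e hreg x)
    exact hzA ((isOutcome_fullRun e hreg hleg hxy).unique hz ▸ hy)
  · rintro ⟨f, hf, hd, hc, hA, hf0⟩
    exact winIIStrat_of_isHom hreg hf hd hc hf0 hA
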